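/- Let R be a Jacobi-diagonalizable Jacobi-orthogonal algebraic curvature tensor on a scalar product space (V, g). If X ∈ V is nonnull, λ ∈ ℝ, and Y lies in V_λ(X) = {Z ∈ V : g(Z, X) = 0 and J_X Z = ε_X λ Z}, then J_Y X lies in the subspace Span{X} + V_λ(X). -/

import Mathlib

/- Common definitions: scalar product space (V, g) with nondegenerate symmetric bilinear
form g, algebraic curvature tensors, Jacobi operators, and derived notions. -/

variable {V : Type*} [AddCommGroup V] [Module ℝ V]

/-- `R` is quadrilinear and satisfies the symmetries of an algebraic curvature tensor. -/
def IsCurv (R : V → V → V → V → ℝ) : Prop :=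
  (∀ (a : ℝ) (X X' Y Z W : V), R (a • X + X') Y Z W = a * R X Y Z W + R X' Y Z W) ∧
  (∀ (a : ℝ) (X Y Y' Z W : V), R X (a • Y + Y') Z W = a * R X Y Z W + R X Y' Z W) ∧
  (∀ (a : ℝ) (X Y Z Z' W : V), R X Y (a • Z + Z') W = a * R X Y Z W + R X Y Z' W) ∧
  (∀ (a : ℝ) (X Y Z W W' : V), R X Y Z (a • W + W') = a * R X Y Z W + R X Y Z W') ∧
  (∀ X Y Z W : V, R X Y Z W = - R Y X Z W) ∧
  (∀ X Y Z W : V, R X Y Z W = - R X Y W Z) ∧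
  (∀ X Y Z W : V, R X Y Z W = R Z W X Y) ∧
  (∀ X Y Z W : V, R X Y Z W + R Y Z X W + R Z X Y W = 0)

/-- `J X` is the Jacobi operator of `R`: the unique linear map with
`g (J X Y) Z = R Y X X Z` for all `Y Z`. -/
def IsJacobi (g : V →ₗ[ℝ] V →ₗ[ℝ] ℝ) (R : V → V → V → V → ℝ) (J : V → V →ₗ[ℝ] V) : Prop :=
  ∀ X Y Z : V, g (J X Y) Z = R Y X X Z

/-- Jacobi-orthogonality: `g (J_X Y) (J_Y X) = 0` for all mutually orthogonal unit `X Y`. -/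
def JacobiOrthogonal (g : V →ₗ[ℝ] V →ₗ[ℝ] ℝ) (J : V → V →ₗ[ℝ] V) : Prop :=
  ∀ X Y : V, (g X X = 1 ∨ g X X = -1) → (g Y Y = 1 ∨ g Y Y = -1) → g X Y = 0 →
    g (J X Y) (J Y X) = 0
/-- An endomorphism is diagonalizable iff its eigenspaces span. -/
def IsDiagonalizable (f : V →ₗ[ℝ] V) : Prop :=
  (⨆ μ : ℝ, Module.End.eigenspace f μ) = ⊤

/-- `R` (via its Jacobi operator `J`) is Jacobi-diagonalizable. -/
def JacobiDiagonalizable (g : V →ₗ[ℝ] V →ₗ[ℝ] ℝ) (J : V → V →ₗ[ℝ] V) : Prop :=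
  ∀ X : V, g X X ≠ 0 → IsDiagonalizable (J X)

/-!
Rescaling extends Jacobi-orthogonality from unit to all nonnull orthogonal pairs `X, Y`. For a
null `Y ⊥ X` pick a nonnull `W ⊥ X`: along `Y + s • W` the pairing `g (J_X ·) (J_· X)` is a cubic
in `s` vanishing off the (finitely many) zeros of a nonzero quadratic, hence vanishes at `s = 0`.
Comparing this identity at `Y + Z` and `Y - Z` for eigenvectors `Y, Z ⊥ X` of `J_X` with eigenvalues
`μ ≠ m` gives `(m - μ) R(X, Y, Y, Z) = 0`, i.e. `J_Y X ⊥ Z`. As `J_X` is diagonalizable, self-adjoint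
and kills `X`, `V = (Span{X} + V_λ(X)) + T` with `T` the sum of the other eigenspaces inside `X^⊥`,
and the two summands are `g`-orthogonal; so `J_Y X ⊥ T` forces `J_Y X ∈ Span{X} + V_λ(X)` by
nondegeneracy.
-/

open Polynomial in
lemma eq_zero_of_cubic_eq_zero_off_quadratic {K : Type*} [CommRing K] [IsDomain K] [Infinite K]
    {c₀ c₁ c₂ c₃ a b c : K} (hc : c ≠ 0)
    (h : ∀ s, a + b * s + c * s ^ 2 ≠ 0 → c₀ + c₁ * s + c₂ * s ^ 2 + c₃ * s ^ 3 = 0) :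
    c₀ = 0 := by
  set p : K[X] := C c₀ + C c₁ * X + C c₂ * X ^ 2 + C c₃ * X ^ 3
  set q : K[X] := C a + C b * X + C c * X ^ 2
  have hq : q ≠ 0 := fun hq => hc (by simpa [q] using congrArg (coeff · 2) hq)
  have hpq : p * q = 0 := Polynomial.funext fun s => by
    rw [eval_mul, eval_zero, mul_eq_zero, or_iff_not_imp_right]
    simp only [p, q, eval_add, eval_mul, eval_C, eval_X, eval_pow]
    exact h s
  simpa [p] using congrArg (eval 0) ((mul_eq_zero.mp hpq).resolve_right hq)

lemma mem_of_sup_eq_top_of_orthogonal {K M : Type*} [CommRing K] [AddCommGroup M] [Module K M]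
    {B : M →ₗ[K] M →ₗ[K] K} (hBsymm : ∀ x y, B x y = B y x)
    (hBnd : ∀ x, (∀ y, B x y = 0) → x = 0) {S T : Submodule K M} (hST : S ⊔ T = ⊤)
    (horth : ∀ s ∈ S, ∀ t ∈ T, B s t = 0) {u : M} (hu : ∀ t ∈ T, B u t = 0) : u ∈ S := by
  obtain ⟨s, hs, t, ht, rfl⟩ := Submodule.mem_sup.mp (hST ▸ Submodule.mem_top : u ∈ S ⊔ T)
  suffices t = 0 by simpa [this] using hs
  refine hBnd t fun z => ?_
  obtain ⟨s', hs', t', ht', rfl⟩ := Submodule.mem_sup.mp (hST ▸ Submodule.mem_top : z ∈ S ⊔ T)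
  have htt' : B t t' = 0 := by
    simpa [horth s hs t' ht'] using hu t' ht'
  simp [hBsymm t s', horth s' hs' t ht, htt']

lemma apply_eq_zero_of_mem_iSup {K M ι : Type*} [CommRing K] [AddCommGroup M] [Module K M]
    {B : M →ₗ[K] M →ₗ[K] K} {P : ι → Submodule K M} {u t : M}
    (h : ∀ i, ∀ t ∈ P i, B u t = 0) (ht : t ∈ ⨆ i, P i) : B u t = 0 :=
  (iSup_le fun i t hti => LinearMap.mem_ker.mpr (h i t hti) : ⨆ i, P i ≤ LinearMap.ker (B u)) ht

lemma exists_smul_unit {g : V →ₗ[ℝ] V →ₗ[ℝ] ℝ} {X : V} (hX : g X X ≠ 0) :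
    ∃ a : ℝ, a ≠ 0 ∧ (g (a • X) (a • X) = 1 ∨ g (a • X) (a • X) = -1) := by
  have hpos : 0 < |g X X| := abs_pos.mpr hX
  refine ⟨(√|g X X|)⁻¹, by positivity, ?_⟩
  have hsq : ((√|g X X|)⁻¹) ^ 2 = |g X X|⁻¹ := by rw [inv_pow, Real.sq_sqrt hpos.le]
  have hval : g ((√|g X X|)⁻¹ • X) ((√|g X X|)⁻¹ • X) = g X X / |g X X| := by
    simp only [map_smul, LinearMap.smul_apply, smul_eq_mul, ← mul_assoc, ← sq, hsq]
    ring
  rw [hval]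
  rcases abs_cases (g X X) with ⟨habs, -⟩ | ⟨habs, -⟩
  · left; rw [habs, div_self hX]
  · right; rw [habs, div_neg, div_self hX]

lemma sub_div_smul_mem_ker {g : V →ₗ[ℝ] V →ₗ[ℝ] ℝ} {X : V} (hX : g X X ≠ 0) (Z : V) :
    Z - (g Z X / g X X) • X ∈ LinearMap.ker (g.flip X) := by
  simp [div_mul_cancel₀ _ hX]

lemma exists_nonnull_orthogonal {g : V →ₗ[ℝ] V →ₗ[ℝ] ℝ} (hgsymm : ∀ x y : V, g x y = g y x)
    (hgnd : ∀ x : V, (∀ y : V, g x y = 0) → x = 0) {X Y : V} (hX : g X X ≠ 0)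
    (hYX : g Y X = 0) (hY : Y ≠ 0) : ∃ W, g W X = 0 ∧ g W W ≠ 0 := by
  obtain ⟨Z, hZ⟩ : ∃ Z, g Y Z ≠ 0 := by
    by_contra! h
    exact hY (hgnd Y h)
  set W := Z - (g Z X / g X X) • X
  have hWX : g W X = 0 := sub_div_smul_mem_ker hX Z
  have hYW : g Y W = g Y Z := by simp [W, hYX]
  by_contra! hnull
  have hsum := hnull (Y + W) (by simp [hYX, hWX])
  simp only [map_add, LinearMap.add_apply, hnull Y hYX, hnull W hWX, hgsymm W Y, hYW] at hsum
  exact hZ (by linarith)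

namespace IsCurv

variable {R : V → V → V → V → ℝ}

lemma map_add₂ (hR : IsCurv R) (X Y Y' Z W : V) : R X (Y + Y') Z W = R X Y Z W + R X Y' Z W := by
  simpa using hR.2.1 1 X Y Y' Z W

lemma map_add₃ (hR : IsCurv R) (X Y Z Z' W : V) : R X Y (Z + Z') W = R X Y Z W + R X Y Z' W := by
  simpa using hR.2.2.1 1 X Y Z Z' W

lemma map_add₄ (hR : IsCurv R) (X Y Z W W' : V) : R X Y Z (W + W') = R X Y Z W + R X Y Z W' := by
  simpa using hR.2.2.2.1 1 X Y Z W W'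

lemma map_smul₂ (hR : IsCurv R) (a : ℝ) (X Y Z W : V) : R X (a • Y) Z W = a * R X Y Z W := by
  have h0 : R X 0 Z W = 0 := by simpa using hR.map_add₂ X 0 0 Z W
  simpa [h0] using hR.2.1 a X Y 0 Z W

lemma map_smul₃ (hR : IsCurv R) (a : ℝ) (X Y Z W : V) : R X Y (a • Z) W = a * R X Y Z W := by
  have h0 : R X Y 0 W = 0 := by simpa using hR.map_add₃ X Y 0 0 W
  simpa [h0] using hR.2.2.1 a X Y Z 0 W

lemma map_smul₄ (hR : IsCurv R) (a : ℝ) (X Y Z W : V) : R X Y Z (a • W) = a * R X Y Z W := by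
  have h0 : R X Y Z 0 = 0 := by simpa using hR.map_add₄ X Y Z 0 0
  simpa [h0] using hR.2.2.2.1 a X Y Z W 0

lemma antisymm_left (hR : IsCurv R) (X Y Z W : V) : R X Y Z W = -R Y X Z W := hR.2.2.2.2.1 X Y Z W

lemma antisymm_right (hR : IsCurv R) (X Y Z W : V) : R X Y Z W = -R X Y W Z :=
  hR.2.2.2.2.2.1 X Y Z W

lemma symm_pairs (hR : IsCurv R) (X Y Z W : V) : R X Y Z W = R Z W X Y := hR.2.2.2.2.2.2.1 X Y Z W

lemma apply_self_left (hR : IsCurv R) (X Z W : V) : R X X Z W = 0 := by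
  linarith [hR.antisymm_left X X Z W]

lemma apply_self_right (hR : IsCurv R) (X Y Z : V) : R X Y Z Z = 0 := by
  linarith [hR.antisymm_right X Y Z Z]

lemma apply_add_smul (hR : IsCurv R) (X Y W U U' : V) (s : ℝ) :
    R X (Y + s • W) (Y + s • W) (U + s • U') =
      R X Y Y U + (R X Y Y U' + R X Y W U + R X W Y U) * s +
        (R X Y W U' + R X W Y U' + R X W W U) * s ^ 2 + R X W W U' * s ^ 3 := by
  simp only [hR.map_add₂, hR.map_add₃, hR.map_add₄, hR.map_smul₂, hR.map_smul₃, hR.map_smul₄]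
  ring

end IsCurv

namespace IsJacobi

variable {g : V →ₗ[ℝ] V →ₗ[ℝ] ℝ} {R : V → V → V → V → ℝ} {J : V → V →ₗ[ℝ] V}

lemma apply_self (hgnd : ∀ x : V, (∀ y : V, g x y = 0) → x = 0) (hR : IsCurv R)
    (hJ : IsJacobi g R J) (X : V) : J X X = 0 :=
  hgnd _ fun Z => by rw [hJ, hR.apply_self_left]

lemma smul_apply (hgnd : ∀ x : V, (∀ y : V, g x y = 0) → x = 0) (hR : IsCurv R)
    (hJ : IsJacobi g R J) (a : ℝ) (X Y : V) : J (a • X) Y = a ^ 2 • J X Y := by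
  refine sub_eq_zero.mp (hgnd _ fun Z => ?_)
  rw [map_sub, LinearMap.sub_apply, hJ, map_smul, LinearMap.smul_apply, hJ, hR.map_smul₂,
    hR.map_smul₃, smul_eq_mul]
  ring

lemma apply_comm (hgsymm : ∀ x y : V, g x y = g y x) (hR : IsCurv R) (hJ : IsJacobi g R J)
    (X Y Z : V) : g (J X Y) Z = g Y (J X Z) := by
  rw [hJ, hgsymm Y, hJ, hR.symm_pairs, hR.antisymm_left, hR.antisymm_right]
  ring

lemma apply_apply_self (hR : IsCurv R) (hJ : IsJacobi g R J) (X Y : V) : g (J X Y) X = 0 := by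
  rw [hJ, hR.apply_self_right]

lemma apply_jacobi_swap (hgsymm : ∀ x y : V, g x y = g y x) (hJ : IsJacobi g R J) (X Y : V) :
    g (J X Y) (J Y X) = R X Y Y (J X Y) := by
  rw [hgsymm, hJ]

lemma apply_eq_zero_of_mem_eigenspace (hgsymm : ∀ x y : V, g x y = g y x) (hR : IsCurv R)
    (hJ : IsJacobi g R J) {X Y Z : V} {μ m : ℝ} (hμm : μ ≠ m)
    (hY : Y ∈ Module.End.eigenspace (J X) μ) (hZ : Z ∈ Module.End.eigenspace (J X) m) :
    g Y Z = 0 := by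
  have h := hJ.apply_comm hgsymm hR X Y Z
  rw [Module.End.mem_eigenspace_iff.mp hY, Module.End.mem_eigenspace_iff.mp hZ] at h
  simp only [map_smul, LinearMap.smul_apply, smul_eq_mul] at h
  exact (mul_eq_zero.mp (by linarith : (μ - m) * g Y Z = 0)).resolve_left (sub_ne_zero.mpr hμm)

end IsJacobi

/-- The paper's `V_λ(X)` is `orthEigenspace g J X (g X X * λ)`. -/
def orthEigenspace (g : V →ₗ[ℝ] V →ₗ[ℝ] ℝ) (J : V → V →ₗ[ℝ] V) (X : V) (μ : ℝ) : Submodule ℝ V :=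
  LinearMap.ker (g.flip X) ⊓ Module.End.eigenspace (J X) μ

section Jacobi

variable {g : V →ₗ[ℝ] V →ₗ[ℝ] ℝ} {R : V → V → V → V → ℝ} {J : V → V →ₗ[ℝ] V}

lemma mem_orthEigenspace {X Y : V} {μ : ℝ} :
    Y ∈ orthEigenspace g J X μ ↔ g Y X = 0 ∧ J X Y = μ • Y := by
  simp [orthEigenspace]

lemma JacobiOrthogonal.apply_eq_zero_of_nonnull (hgnd : ∀ x : V, (∀ y : V, g x y = 0) → x = 0)
    (hR : IsCurv R) (hJ : IsJacobi g R J) (horth : JacobiOrthogonal g J) {X Y : V}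
    (hX : g X X ≠ 0) (hY : g Y Y ≠ 0) (hXY : g X Y = 0) : g (J X Y) (J Y X) = 0 := by
  obtain ⟨a, ha, haX⟩ := exists_smul_unit hX
  obtain ⟨b, hb, hbY⟩ := exists_smul_unit hY
  have h := horth (a • X) (b • Y) haX hbY (by simp [hXY])
  rw [hJ.smul_apply hgnd hR, hJ.smul_apply hgnd hR] at h
  simpa [ha, hb] using h

lemma JacobiOrthogonal.apply_eq_zero (hgsymm : ∀ x y : V, g x y = g y x)
    (hgnd : ∀ x : V, (∀ y : V, g x y = 0) → x = 0) (hR : IsCurv R) (hJ : IsJacobi g R J)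
    (horth : JacobiOrthogonal g J) {X Y : V} (hX : g X X ≠ 0) (hYX : g Y X = 0) :
    g (J X Y) (J Y X) = 0 := by
  rcases eq_or_ne Y 0 with rfl | hY
  · simp
  obtain ⟨W, hWX, hWW⟩ := exists_nonnull_orthogonal hgsymm hgnd hX hYX hY
  rw [hJ.apply_jacobi_swap hgsymm]
  -- Along the line `Y + s • W` the pairing is a cubic in `s`, vanishing wherever the line is nonnull.
  apply eq_zero_of_cubic_eq_zero_off_quadratic (a := g Y Y) (b := 2 * g Y W) hWW
  intro s hs
  have hline : g (Y + s • W) (Y + s • W) = g Y Y + 2 * g Y W * s + g W W * s ^ 2 := by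
    simp only [map_add, map_smul, LinearMap.add_apply, LinearMap.smul_apply, smul_eq_mul,
      hgsymm W Y]
    ring
  have h := horth.apply_eq_zero_of_nonnull hgnd hR hJ hX (hline ▸ hs)
    (by simp [hgsymm X, hYX, hWX])
  rwa [hJ.apply_jacobi_swap hgsymm, map_add, map_smul, hR.apply_add_smul] at h

lemma JacobiOrthogonal.apply_eq_zero_of_mem_orthEigenspace (hgsymm : ∀ x y : V, g x y = g y x)
    (hgnd : ∀ x : V, (∀ y : V, g x y = 0) → x = 0) (hR : IsCurv R) (hJ : IsJacobi g R J)
    (horth : JacobiOrthogonal g J) {X Y Z : V} {μ m : ℝ} (hX : g X X ≠ 0) (hμm : μ ≠ m)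
    (hY : Y ∈ orthEigenspace g J X μ) (hZ : Z ∈ orthEigenspace g J X m) : g (J Y X) Z = 0 := by
  rw [mem_orthEigenspace] at hY hZ
  have hline (s : ℝ) : R X (Y + s • Z) (Y + s • Z) (μ • Y + s • m • Z) = 0 := by
    have h := horth.apply_eq_zero hgsymm hgnd hR hJ hX (Y := Y + s • Z) (by simp [hY.1, hZ.1])
    rwa [hJ.apply_jacobi_swap hgsymm, map_add, map_smul, hY.2, hZ.2] at h
  have hpos := hline 1
  have hneg := hline (-1)
  simp only [hR.apply_add_smul, hR.map_smul₄, hR.apply_self_right] at hpos hneg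
  have hmul : (m - μ) * R X Y Y Z = 0 := by
    linear_combination (hpos - hneg) / 2 - μ * hR.antisymm_right X Y Z Y
  rw [hJ]
  exact (mul_eq_zero.mp hmul).resolve_left (sub_ne_zero.mpr hμm.symm)

lemma eigenspace_le_span_sup_orthEigenspace (hgnd : ∀ x : V, (∀ y : V, g x y = 0) → x = 0)
    (hR : IsCurv R) (hJ : IsJacobi g R J) {X : V} (hX : g X X ≠ 0) (m : ℝ) :
    Module.End.eigenspace (J X) m ≤ Submodule.span ℝ {X} ⊔ orthEigenspace g J X m := by
  intro v hv
  rw [Module.End.mem_eigenspace_iff] at hv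
  have hmv : m * g v X = 0 := by simpa [hv] using hJ.apply_apply_self hR X v
  have hmc : m * (g v X / g X X) = 0 := by rw [← mul_div_assoc, hmv, zero_div]
  rw [← add_sub_cancel ((g v X / g X X) • X) v]
  refine Submodule.add_mem_sup (Submodule.smul_mem _ _ (Submodule.mem_span_singleton_self X))
    ⟨sub_div_smul_mem_ker hX v, Module.End.mem_eigenspace_iff.mpr ?_⟩
  rw [map_sub, map_smul, hJ.apply_self hgnd hR, hv, smul_sub, smul_smul, hmc, zero_smul, smul_zero]

lemma span_sup_orthEigenspace_sup_iSup_eq_top (hgnd : ∀ x : V, (∀ y : V, g x y = 0) → x = 0)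
    (hR : IsCurv R) (hJ : IsJacobi g R J) {X : V} (hX : g X X ≠ 0)
    (hdiag : IsDiagonalizable (J X)) (μ : ℝ) :
    (Submodule.span ℝ {X} ⊔ orthEigenspace g J X μ) ⊔
      ⨆ m : {m : ℝ // m ≠ μ}, orthEigenspace g J X m = ⊤ := by
  rw [eq_top_iff, ← hdiag]
  refine iSup_le fun m => (eigenspace_le_span_sup_orthEigenspace hgnd hR hJ hX m).trans ?_
  rcases eq_or_ne m μ with rfl | hm
  · exact le_sup_left
  · exact sup_le (le_sup_left.trans le_sup_left)
      ((le_iSup (fun m : {m : ℝ // m ≠ μ} => orthEigenspace g J X m) ⟨m, hm⟩).trans le_sup_right)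

lemma apply_eq_zero_of_mem_span_sup_orthEigenspace (hgsymm : ∀ x y : V, g x y = g y x)
    (hR : IsCurv R) (hJ : IsJacobi g R J) {X s t : V} {μ m : ℝ} (hμm : μ ≠ m)
    (hs : s ∈ Submodule.span ℝ {X} ⊔ orthEigenspace g J X μ) (ht : t ∈ orthEigenspace g J X m) :
    g s t = 0 := by
  obtain ⟨x, hx, y, hy, rfl⟩ := Submodule.mem_sup.mp hs
  obtain ⟨a, rfl⟩ := Submodule.mem_span_singleton.mp hx
  have hXt : g X t = 0 := by rw [hgsymm]; exact ht.1
  simp [hXt, hJ.apply_eq_zero_of_mem_eigenspace hgsymm hR hμm hy.2 ht.2]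

end Jacobi

theorem stmt_6_general {V : Type*} [AddCommGroup V] [Module ℝ V]
(g : V →ₗ[ℝ] V →ₗ[ℝ] ℝ) (hgsymm : ∀ x y : V, g x y = g y x)
    (hgnd : ∀ x : V, (∀ y : V, g x y = 0) → x = 0)
    (R : V → V → V → V → ℝ) (hR : IsCurv R)
    (J : V → V →ₗ[ℝ] V) (hJ : IsJacobi g R J)
    (hdiag : JacobiDiagonalizable g J) (horth : JacobiOrthogonal g J)
    (X : V) (hX : g X X ≠ 0) (l : ℝ) (Y : V)
    (hY : Y ∈ LinearMap.ker (g.flip X) ⊓ Module.End.eigenspace (J X) (g X X * l)) :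
    J Y X ∈ Submodule.span ℝ {X} ⊔
      (LinearMap.ker (g.flip X) ⊓ Module.End.eigenspace (J X) (g X X * l)) := by
  refine mem_of_sup_eq_top_of_orthogonal hgsymm hgnd
    (span_sup_orthEigenspace_sup_iSup_eq_top hgnd hR hJ hX (hdiag X hX) (g X X * l))
    (fun s hs t ht => ?_) (fun t ht => ?_)
  · exact apply_eq_zero_of_mem_iSup (fun m t htm =>
      apply_eq_zero_of_mem_span_sup_orthEigenspace hgsymm hR hJ m.2.symm hs htm) ht
  · exact apply_eq_zero_of_mem_iSup (fun m t htm =>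
      horth.apply_eq_zero_of_mem_orthEigenspace hgsymm hgnd hR hJ hX m.2.symm hY htm) ht

/-- for Jacobi-diagonalizable Jacobi-orthogonal R, nonnull X, and
Y ∈ V_λ(X) = {Z : g(Z,X) = 0, J_X Z = ε_X λ Z}, one has J_Y X ∈ Span{X} + V_λ(X). -/
theorem stmt_6 {V : Type*} [AddCommGroup V] [Module ℝ V] [FiniteDimensional ℝ V]
(g : V →ₗ[ℝ] V →ₗ[ℝ] ℝ) (hgsymm : ∀ x y : V, g x y = g y x)
    (hgnd : ∀ x : V, (∀ y : V, g x y = 0) → x = 0)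
    (R : V → V → V → V → ℝ) (hR : IsCurv R)
    (J : V → V →ₗ[ℝ] V) (hJ : IsJacobi g R J)
    (hdiag : JacobiDiagonalizable g J) (horth : JacobiOrthogonal g J)
    (X : V) (hX : g X X ≠ 0) (l : ℝ) (Y : V)
    (hY : Y ∈ LinearMap.ker (g.flip X) ⊓ Module.End.eigenspace (J X) (g X X * l)) :
    J Y X ∈ Submodule.span ℝ {X} ⊔
      (LinearMap.ker (g.flip X) ⊓ Module.End.eigenspace (J X) (g X X * l)) :=
  stmt_6_general g hgsymm hgnd R hR J hJ hdiag horth X hX l Y hY
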